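/- Fix labels Y_1,...,Y_n ∈ ℝ, noisy labels Ỹ_1,...,Ỹ_n ∈ ℝ, symmetric weights w_{ij} ≥ 0 and kernel values K_{ij} ≥ 0 for i ≠ j. Let L be a uniformly random m-subset of {1,...,n} with m ≥ 2, and define Δ_i = Y_i − Ỹ_i for i ∈ L and Δ_i = 0 otherwise. Define T̂_0 = Σ_{i≠j} w_{ij} Ỹ_i Ỹ_j K_{ij}, T̂_1 = (n/m) Σ_{i∈L} Σ_{j≠i} w_{ij} Δ_i Ỹ_j K_{ij}, T̂_1' = (n/m) Σ_{j∈L} Σ_{i≠j} w_{ij} Ỹ_i Δ_j K_{ij}, and T̂_2 = (n(n-1))/(m(m-1)) Σ_{i,j∈L, i≠j} w_{ij} Δ_i Δ_j K_{ij}. Then E_L[ (1/2)(T̂_0 + T̂_1 + T̂_1' + T̂_2) ] = Σ_{i<j} w_{ij} Y_i Y_j K_{ij}, i.e., the prediction-powered data–data pair count is an unbiased estimator of the oracle pair count. -/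
import Mathlib
open Finset

lemma card_filter_subset_powersetCard {α : Type*} [DecidableEq α] (s t : Finset α) (m : ℕ)
    (hts : t ⊆ s) (htm : t.card ≤ m) :
    ((powersetCard m s).filter (fun L => t ⊆ L)).card
      = (s.card - t.card).choose (m - t.card) := by
  rw [← card_sdiff_of_subset hts, ← card_powersetCard (m - t.card) (s \ t)]
  apply card_bij (fun L _ => L \ t)
  · intro L hL
    simp only [mem_filter, mem_powersetCard] at hL
    obtain ⟨⟨hLs, hLc⟩, htL⟩ := hL
    simp only [mem_powersetCard]
    exact ⟨sdiff_subset_sdiff hLs Subset.rfl, by rw [card_sdiff_of_subset htL, hLc]⟩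
  · intro L1 h1 L2 h2 h
    simp only [mem_filter, mem_powersetCard] at h1 h2
    rw [← sdiff_union_of_subset h1.2, ← sdiff_union_of_subset h2.2, h]
  · intro M hM
    simp only [mem_powersetCard, subset_sdiff] at hM
    obtain ⟨⟨hMs, hMt⟩, hMc⟩ := hM
    refine ⟨M ∪ t, ?_, ?_⟩
    · simp only [mem_filter, mem_powersetCard]
      refine ⟨⟨union_subset hMs hts, ?_⟩, subset_union_right⟩
      rw [card_union_of_disjoint hMt, hMc, Nat.sub_add_cancel htm]
    · rw [union_sdiff_right, Finset.sdiff_eq_self_iff_disjoint.2 hMt]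

lemma count_single (n m : ℕ) (hm : 1 ≤ m) (i : Fin n) :
    ((powersetCard m (univ : Finset (Fin n))).filter (fun L => i ∈ L)).card
      = (n - 1).choose (m - 1) := by
  have := card_filter_subset_powersetCard (univ : Finset (Fin n)) {i} m
    (subset_univ _) (by simpa using hm)
  simpa [card_univ, singleton_subset_iff] using this

lemma count_pair (n m : ℕ) (hm : 2 ≤ m) {i j : Fin n} (hij : i ≠ j) :
    ((powersetCard m (univ : Finset (Fin n))).filter (fun L => i ∈ L ∧ j ∈ L)).card
      = (n - 2).choose (m - 2) := by
  have := card_filter_subset_powersetCard (univ : Finset (Fin n)) {i, j} m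
    (subset_univ _) (by rw [card_pair hij]; exact hm)
  simpa [card_univ, card_pair hij, insert_subset_iff, singleton_subset_iff] using this

lemma sum_single (n m : ℕ) (hm : 1 ≤ m) (g : Fin n → ℝ) :
    ∑ L ∈ powersetCard m (univ : Finset (Fin n)), ∑ i ∈ L, g i
      = ((n - 1).choose (m - 1) : ℝ) * ∑ i, g i := by
  have h1 : ∀ L ∈ powersetCard m (univ : Finset (Fin n)),
      ∑ i ∈ L, g i = ∑ i : Fin n, if i ∈ L then g i else 0 := by
    intro L _
    rw [Finset.sum_ite_mem, univ_inter]
  rw [Finset.sum_congr rfl h1, Finset.sum_comm]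
  rw [Finset.mul_sum]
  refine Finset.sum_congr rfl fun i _ => ?_
  rw [← Finset.sum_filter, Finset.sum_const, nsmul_eq_mul, count_single n m hm]

lemma sum_pair (n m : ℕ) (hm : 2 ≤ m) (h : Fin n → Fin n → ℝ) :
    ∑ L ∈ powersetCard m (univ : Finset (Fin n)), ∑ i ∈ L, ∑ j ∈ L \ {i}, h i j
      = ((n - 2).choose (m - 2) : ℝ) *
          ∑ i : Fin n, ∑ j ∈ (univ : Finset (Fin n)) \ {i}, h i j := by
  have h1 : ∀ L ∈ powersetCard m (univ : Finset (Fin n)),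
      ∑ i ∈ L, ∑ j ∈ L \ {i}, h i j
        = ∑ i : Fin n, ∑ j ∈ (univ : Finset (Fin n)) \ {i},
            if i ∈ L ∧ j ∈ L then h i j else 0 := by
    intro L _
    have : ∀ i : Fin n, (∑ j ∈ (univ : Finset (Fin n)) \ {i},
        if i ∈ L ∧ j ∈ L then h i j else 0)
        = if i ∈ L then ∑ j ∈ L \ {i}, h i j else 0 := by
      intro i
      by_cases hi : i ∈ L
      · rw [if_pos hi]
        simp only [hi, true_and]
        rw [Finset.sum_ite_mem]
        congr 1
        ext j
        simp only [mem_inter, mem_sdiff, mem_univ, mem_singleton, true_and]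
        tauto
      · simp [hi]
    rw [Finset.sum_congr rfl (fun i _ => this i), Finset.sum_ite_mem, univ_inter]
  rw [Finset.sum_congr rfl h1, Finset.sum_comm, Finset.mul_sum]
  refine Finset.sum_congr rfl fun i _ => ?_
  rw [Finset.sum_comm, Finset.mul_sum]
  refine Finset.sum_congr rfl fun j hj => ?_
  have hij : i ≠ j := by
    simp only [mem_sdiff, mem_singleton] at hj
    exact fun e => hj.2 e.symm
  rw [← Finset.sum_filter, Finset.sum_const, nsmul_eq_mul, count_pair n m hm hij]

lemma choose_alg (n m : ℕ) (hm : 2 ≤ m) (hmn : m ≤ n) (A B C D : ℝ) :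
    (1/2 : ℝ) * ((n.choose m : ℝ) * A
      + ((n : ℝ)/m) * (((n-1).choose (m-1) : ℝ) * B)
      + ((n : ℝ)/m) * (((n-1).choose (m-1) : ℝ) * C)
      + (((n : ℝ) * ((n : ℝ) - 1)) / ((m : ℝ) * ((m : ℝ) - 1))) *
          (((n-2).choose (m-2) : ℝ) * D))
      / (n.choose m : ℝ)
    = (1/2 : ℝ) * (A + B + C + D) := by
  have h2n : 2 ≤ n := hm.trans hmn
  obtain ⟨m₂, rfl⟩ := Nat.exists_eq_add_of_le hm
  obtain ⟨n₂, rfl⟩ := Nat.exists_eq_add_of_le h2n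
  have hmn' : m₂ ≤ n₂ := by omega
  rw [show 2 + n₂ - 1 = 1 + n₂ by omega, show 2 + n₂ - 2 = n₂ by omega,
      show 2 + m₂ - 1 = 1 + m₂ by omega, show 2 + m₂ - 2 = m₂ by omega]
  have hc1 : (2 + n₂) * ((1 + n₂).choose (1 + m₂)) = ((2 + n₂).choose (2 + m₂)) * (2 + m₂) := by
    have := Nat.add_one_mul_choose_eq (1 + n₂) (1 + m₂)
    rw [show 1 + n₂ + 1 = 2 + n₂ by ring, show 1 + m₂ + 1 = 2 + m₂ by ring] at this
    exact this
  have hc2 : (1 + n₂) * (n₂.choose m₂) = ((1 + n₂).choose (1 + m₂)) * (1 + m₂) := by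
    have := Nat.add_one_mul_choose_eq n₂ m₂
    rw [show n₂ + 1 = 1 + n₂ by ring, show m₂ + 1 = 1 + m₂ by ring] at this
    exact this
  have hC0 : ((2 + n₂).choose (2 + m₂) : ℝ) ≠ 0 := by
    have := Nat.choose_pos hmn; positivity
  have hm0 : ((2 + m₂ : ℕ) : ℝ) ≠ 0 := by positivity
  have hme : ((2 + m₂ : ℕ) : ℝ) - 1 = ((1 + m₂ : ℕ) : ℝ) := by push_cast; ring
  have hne : ((2 + n₂ : ℕ) : ℝ) - 1 = ((1 + n₂ : ℕ) : ℝ) := by push_cast; ring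
  have hm1 : ((2 + m₂ : ℕ) : ℝ) - 1 ≠ 0 := by rw [hme]; positivity
  have e1 : (((2 + n₂ : ℕ) : ℝ)/((2 + m₂ : ℕ) : ℝ)) * (((1 + n₂).choose (1 + m₂) : ℝ))
      = ((2 + n₂).choose (2 + m₂) : ℝ) := by
    rw [div_mul_eq_mul_div, div_eq_iff hm0]
    exact_mod_cast hc1
  have e1' : (((1 + n₂ : ℕ) : ℝ)/((1 + m₂ : ℕ) : ℝ)) * ((n₂.choose m₂ : ℝ))
      = ((1 + n₂).choose (1 + m₂) : ℝ) := by
    rw [div_mul_eq_mul_div, div_eq_iff (by positivity : ((1 + m₂ : ℕ) : ℝ) ≠ 0)]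
    exact_mod_cast hc2
  have e2 : (((2 + n₂ : ℕ) : ℝ) * (((2 + n₂ : ℕ) : ℝ) - 1)) /
        (((2 + m₂ : ℕ) : ℝ) * (((2 + m₂ : ℕ) : ℝ) - 1)) * ((n₂.choose m₂ : ℝ))
      = ((2 + n₂).choose (2 + m₂) : ℝ) := by
    rw [hme, hne, show (((2 + n₂:ℕ):ℝ) * ((1 + n₂:ℕ):ℝ)) / (((2 + m₂:ℕ):ℝ) * ((1 + m₂:ℕ):ℝ))
        = (((2 + n₂:ℕ):ℝ)/((2 + m₂:ℕ):ℝ)) * (((1 + n₂:ℕ):ℝ)/((1 + m₂:ℕ):ℝ)) by ring,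
      mul_assoc, e1', e1]
  have key : ∀ X : ℝ, (((2 + n₂ : ℕ) : ℝ)/((2 + m₂ : ℕ) : ℝ)) *
      ((((1 + n₂).choose (1 + m₂)) : ℝ) * X) = (((2 + n₂).choose (2 + m₂)) : ℝ) * X := by
    intro X; rw [← mul_assoc, e1]
  have key2 : ∀ X : ℝ, ((((2 + n₂ : ℕ) : ℝ) * (((2 + n₂ : ℕ) : ℝ) - 1)) /
        (((2 + m₂ : ℕ) : ℝ) * (((2 + m₂ : ℕ) : ℝ) - 1))) * (((n₂.choose m₂) : ℝ) * X)
      = (((2 + n₂).choose (2 + m₂)) : ℝ) * X := by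
    intro X; rw [← mul_assoc, e2]
  rw [key B, key C, key2 D]
  field_simp

/-- Design-unbiasedness of the prediction-powered data–data pair count: for a
uniformly random `m`-subset `L` of `{1,...,n}` (with `m ≥ 2`), residuals
`Δᵢ = Yᵢ - Ỹᵢ` on `L` and `0` off `L`, and Horvitz–Thompson scaled terms
`T̂₀, T̂₁, T̂₁', T̂₂`, the expectation of `(1/2)(T̂₀ + T̂₁ + T̂₁' + T̂₂)` equals the
oracle pair count `∑_{i<j} w_{ij} Yᵢ Yⱼ K_{ij}`. -/
theorem pp_dd_unbiased (n m : ℕ) (hm : 2 ≤ m) (hmn : m ≤ n)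
    (Y Yt : Fin n → ℝ) (w K : Fin n → Fin n → ℝ)
    (hw : ∀ i j, 0 ≤ w i j) (hK : ∀ i j, 0 ≤ K i j)
    (hwsymm : ∀ i j, w i j = w j i) (hKsymm : ∀ i j, K i j = K j i) :
    (∑ L ∈ powersetCard m (univ : Finset (Fin n)),
        (let Δ : Fin n → ℝ := fun i => if i ∈ L then Y i - Yt i else 0
         (1 / 2 : ℝ) *
          ((∑ i, ∑ j ∈ (univ : Finset (Fin n)) \ {i}, w i j * Yt i * Yt j * K i j)
           + ((n : ℝ) / m) * (∑ i ∈ L, ∑ j ∈ (univ : Finset (Fin n)) \ {i},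
                w i j * Δ i * Yt j * K i j)
           + ((n : ℝ) / m) * (∑ j ∈ L, ∑ i ∈ (univ : Finset (Fin n)) \ {j},
                w i j * Yt i * Δ j * K i j)
           + (((n : ℝ) * ((n : ℝ) - 1)) / ((m : ℝ) * ((m : ℝ) - 1))) *
               (∑ i ∈ L, ∑ j ∈ L \ {i}, w i j * Δ i * Δ j * K i j))))
      / (n.choose m)
    = ∑ i, ∑ j ∈ (univ : Finset (Fin n)).filter (fun j => i < j),
        w i j * Y i * Y j * K i j := by
  have hm1 : 1 ≤ m := by omega
  -- Step 1: simplify the summand for each L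
  have hstep : ∀ L ∈ powersetCard m (univ : Finset (Fin n)),
      (let Δ : Fin n → ℝ := fun i => if i ∈ L then Y i - Yt i else 0
       (1 / 2 : ℝ) *
        ((∑ i, ∑ j ∈ (univ : Finset (Fin n)) \ {i}, w i j * Yt i * Yt j * K i j)
         + ((n : ℝ) / m) * (∑ i ∈ L, ∑ j ∈ (univ : Finset (Fin n)) \ {i},
              w i j * Δ i * Yt j * K i j)
         + ((n : ℝ) / m) * (∑ j ∈ L, ∑ i ∈ (univ : Finset (Fin n)) \ {j},
              w i j * Yt i * Δ j * K i j)
         + (((n : ℝ) * ((n : ℝ) - 1)) / ((m : ℝ) * ((m : ℝ) - 1))) *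
             (∑ i ∈ L, ∑ j ∈ L \ {i}, w i j * Δ i * Δ j * K i j)))
      = (1 / 2 : ℝ) *
        ((∑ i, ∑ j ∈ (univ : Finset (Fin n)) \ {i}, w i j * Yt i * Yt j * K i j)
         + ((n : ℝ) / m) * (∑ i ∈ L, ∑ j ∈ (univ : Finset (Fin n)) \ {i},
              w i j * (Y i - Yt i) * Yt j * K i j)
         + ((n : ℝ) / m) * (∑ j ∈ L, ∑ i ∈ (univ : Finset (Fin n)) \ {j},
              w i j * Yt i * (Y j - Yt j) * K i j)
         + (((n : ℝ) * ((n : ℝ) - 1)) / ((m : ℝ) * ((m : ℝ) - 1))) *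
             (∑ i ∈ L, ∑ j ∈ L \ {i},
                w i j * (Y i - Yt i) * (Y j - Yt j) * K i j)) := by
    intro L _
    have e1 : (∑ i ∈ L, ∑ j ∈ (univ : Finset (Fin n)) \ {i},
          w i j * (if i ∈ L then Y i - Yt i else 0) * Yt j * K i j)
        = ∑ i ∈ L, ∑ j ∈ (univ : Finset (Fin n)) \ {i},
            w i j * (Y i - Yt i) * Yt j * K i j :=
      Finset.sum_congr rfl fun i hi => Finset.sum_congr rfl fun j _ => by rw [if_pos hi]
    have e2 : (∑ j ∈ L, ∑ i ∈ (univ : Finset (Fin n)) \ {j},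
          w i j * Yt i * (if j ∈ L then Y j - Yt j else 0) * K i j)
        = ∑ j ∈ L, ∑ i ∈ (univ : Finset (Fin n)) \ {j},
            w i j * Yt i * (Y j - Yt j) * K i j :=
      Finset.sum_congr rfl fun j hj => Finset.sum_congr rfl fun i _ => by rw [if_pos hj]
    have e3 : (∑ i ∈ L, ∑ j ∈ L \ {i},
          w i j * (if i ∈ L then Y i - Yt i else 0) *
            (if j ∈ L then Y j - Yt j else 0) * K i j)
        = ∑ i ∈ L, ∑ j ∈ L \ {i},
            w i j * (Y i - Yt i) * (Y j - Yt j) * K i j :=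
      Finset.sum_congr rfl fun i hi => Finset.sum_congr rfl fun j hj => by
        rw [if_pos hi, if_pos (mem_sdiff.1 hj).1]
    dsimp only
    rw [e1, e2, e3]
  rw [Finset.sum_congr rfl hstep, ← Finset.mul_sum]
  simp only [Finset.sum_add_distrib, ← Finset.mul_sum]
  rw [Finset.sum_const, card_powersetCard, card_univ, Fintype.card_fin, nsmul_eq_mul]
  rw [sum_single n m hm1, sum_single n m hm1, sum_pair n m hm]
  rw [choose_alg n m hm hmn]
  -- swap the third double sum to outer-i / inner-j form
  have swap3 : (∑ j : Fin n, ∑ i ∈ (univ : Finset (Fin n)) \ {j},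
        w i j * Yt i * (Y j - Yt j) * K i j)
      = ∑ i : Fin n, ∑ j ∈ (univ : Finset (Fin n)) \ {i},
          w i j * Yt i * (Y j - Yt j) * K i j := by
    refine Finset.sum_comm' ?_
    intro x y
    simp only [mem_univ, mem_sdiff, mem_singleton, true_and, and_true]
    exact ⟨fun h e => h (e ▸ rfl), fun h e => h (e ▸ rfl)⟩
  rw [swap3]
  simp only [← Finset.sum_add_distrib]
  have combine : ∀ i : Fin n, ∀ j ∈ (univ : Finset (Fin n)) \ {i},
      w i j * Yt i * Yt j * K i j + w i j * (Y i - Yt i) * Yt j * K i j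
        + w i j * Yt i * (Y j - Yt j) * K i j
        + w i j * (Y i - Yt i) * (Y j - Yt j) * K i j
      = w i j * Y i * Y j * K i j := by
    intro i j _; ring
  rw [Finset.sum_congr rfl fun i _ => Finset.sum_congr rfl (combine i)]
  have hsplit : ∀ i : Fin n, ∑ j ∈ (univ : Finset (Fin n)) \ {i},
        w i j * Y i * Y j * K i j
      = (∑ j ∈ (univ : Finset (Fin n)).filter (fun j => i < j),
          w i j * Y i * Y j * K i j)
        + ∑ j ∈ (univ : Finset (Fin n)).filter (fun j => j < i),
            w i j * Y i * Y j * K i j := by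
    intro i
    rw [← Finset.sum_union (Finset.disjoint_filter.2 fun j _ h1 h2 => lt_asymm h1 h2)]
    refine Finset.sum_congr ?_ fun _ _ => rfl
    ext j
    simp only [mem_sdiff, mem_univ, mem_singleton, true_and, mem_union, mem_filter]
    constructor
    · intro h
      exact Ne.lt_or_gt (Ne.symm h)
    · rintro (h | h) <;> · rintro rfl; exact lt_irrefl _ h
  rw [Finset.sum_congr rfl fun i _ => hsplit i, Finset.sum_add_distrib]
  have hswap : (∑ i : Fin n, ∑ j ∈ (univ : Finset (Fin n)).filter (fun j => j < i),
        w i j * Y i * Y j * K i j)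
      = ∑ i : Fin n, ∑ j ∈ (univ : Finset (Fin n)).filter (fun j => i < j),
          w i j * Y i * Y j * K i j := by
    rw [Finset.sum_comm'
      (s' := fun y => (univ : Finset (Fin n)).filter (fun x => y < x)) (t' := univ)
      (by intro x y; simp only [mem_univ, mem_filter, true_and, and_true])]
    refine Finset.sum_congr rfl fun j _ => Finset.sum_congr rfl fun i _ => ?_
    rw [hwsymm, hKsymm]; ring
  rw [hswap]
  ring
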